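/- arXiv:1411.6835 — 2 statements merged into one kernel-verified Lean document; each statement's English description precedes it below -/
import Mathlib

section
/- For single-letter encoding functions φ_A: X → M_A, φ_B: Y → M_B, and φ_C: M_A × M_B → M_C, nodes A and B can both recover f(x,y) with zero error (i.e., there exist ψ_A: X × M_C → Z and ψ_B: Y × M_C → Z with ψ_A(x, φ_C(φ_A(x), φ_B(y))) = f(x,y) and ψ_B(y, φ_C(φ_A(x), φ_B(y))) = f(x,y) for all (x,y) in the support S) if and only if the composed map (x,y) ↦ φ_C(φ_A(x), φ_B(y)) is a proper coloring of the f-modified rook's graph G^f_{XY}. -/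
/-- For single-letter encoders φA, φB, φC, both terminals can recover
`f` with zero error iff `(x,y) ↦ φC (φA x) (φB y)` is a proper coloring of the
f-modified rook's graph `G^f_{XY}` (vertex set `S`, two distinct vertices adjacent
iff they share a coordinate and have different `f`-values). -/
theorem stmt0 {X Y Z MA MB MC : Type*} [Nonempty Z]
    (f : X → Y → Z) (S : Set (X × Y))
    (φA : X → MA) (φB : Y → MB) (φC : MA → MB → MC) :
    (∃ (ψA : X → MC → Z) (ψB : Y → MC → Z),
      ∀ x y, (x, y) ∈ S →
        ψA x (φC (φA x) (φB y)) = f x y ∧ ψB y (φC (φA x) (φB y)) = f x y) ↔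
    (∀ x y x' y', (x, y) ∈ S → (x', y') ∈ S →
      ((x = x' ∨ y = y') ∧ (x, y) ≠ (x', y') ∧ f x y ≠ f x' y') →
      φC (φA x) (φB y) ≠ φC (φA x') (φB y')) := by
  classical
  constructor
  · rintro ⟨ψA, ψB, h⟩ x y x' y' hS hS' ⟨hor, _, hf⟩ hc
    rcases hor with rfl | rfl
    · exact hf (((h x y hS).1.symm.trans (by rw [hc])).trans (h x y' hS').1)
    · exact hf (((h x y hS).2.symm.trans (by rw [hc])).trans (h x' y hS').2)
  · intro hcol
    refine ⟨fun x m => if h : ∃ y, (x, y) ∈ S ∧ φC (φA x) (φB y) = m then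
        f x h.choose else Classical.arbitrary Z,
      fun y m => if h : ∃ x, (x, y) ∈ S ∧ φC (φA x) (φB y) = m then
        f h.choose y else Classical.arbitrary Z, ?_⟩
    intro x y hS
    constructor
    · have h : ∃ y', (x, y') ∈ S ∧ φC (φA x) (φB y') = φC (φA x) (φB y) :=
        ⟨y, hS, rfl⟩
      simp only []; rw [dif_pos h]
      by_contra hne
      have hy : y ≠ h.choose := by intro e; exact hne (by rw [← e])
      exact hcol x h.choose x y h.choose_spec.1 hS
        ⟨Or.inl rfl, by simp [hy.symm], hne⟩ h.choose_spec.2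
    · have h : ∃ x', (x', y) ∈ S ∧ φC (φA x') (φB y) = φC (φA x) (φB y) :=
        ⟨x, hS, rfl⟩
      simp only []; rw [dif_pos h]
      by_contra hne
      have hx : x ≠ h.choose := by intro e; exact hne (by rw [← e])
      exact hcol h.choose y x y h.choose_spec.1 hS
        ⟨Or.inr rfl, by simp [hx.symm], hne⟩ h.choose_spec.2
end

section
/- Let (c_A, c_B, c_C) be a color cover for G^f_{XY}, i.e., c_A × c_B and c_C are proper colorings of G^f_{XY} and there exists θ with θ ∘ (c_A × c_B) = c_C on S. Then c_C being constant on a set forces c_A × c_B to take f-constant values on rook-adjacent pairs in that set; in particular, for any encodings of c_A, c_B at the terminals and c_C at the relay, nodes A and B can decode f with zero error: there exist ψ_A, ψ_B with ψ_A(x, c_C(x,y)) = f(x,y) = ψ_B(y, c_C(x,y)) for all (x,y) ∈ S. -/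
/-- If `(cA, cB, cC)` is a color cover for the f-modified rook's
graph `G^f_{XY}` (i.e. `cA × cB` and `cC` are proper colorings and `cA × cB`
refines `cC` on `S` via some `θ`), then `cC` being equal on rook-adjacent pairs of
`S` forces equal `f`-values, and nodes A and B can decode `f` with zero error. -/
theorem stmt16 {X Y Z MA MB MC : Type*} [Nonempty Z]
    (f : X → Y → Z) (S : Set (X × Y))
    (cA : X → MA) (cB : Y → MB) (cC : X × Y → MC)
    (hAB : ∀ x y x' y', (x, y) ∈ S → (x', y') ∈ S →
      ((x = x' ∨ y = y') ∧ (x, y) ≠ (x', y') ∧ f x y ≠ f x' y') →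
      (cA x, cB y) ≠ (cA x', cB y'))
    (hC : ∀ x y x' y', (x, y) ∈ S → (x', y') ∈ S →
      ((x = x' ∨ y = y') ∧ (x, y) ≠ (x', y') ∧ f x y ≠ f x' y') →
      cC (x, y) ≠ cC (x', y'))
    (θ : MA × MB → MC)
    (hθ : ∀ x y, (x, y) ∈ S → θ (cA x, cB y) = cC (x, y)) :
    (∀ x y x' y', (x, y) ∈ S → (x', y') ∈ S → (x = x' ∨ y = y') →
      cC (x, y) = cC (x', y') → f x y = f x' y') ∧
    (∃ (ψA : X → MC → Z) (ψB : Y → MC → Z),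
      ∀ x y, (x, y) ∈ S → ψA x (cC (x, y)) = f x y ∧ ψB y (cC (x, y)) = f x y) := by
  classical
  have key : ∀ x y x' y', (x, y) ∈ S → (x', y') ∈ S → (x = x' ∨ y = y') →
      cC (x, y) = cC (x', y') → f x y = f x' y' := by
    intro x y x' y' hS hS' hadj hcc
    by_contra hne
    by_cases heq : (x, y) = (x', y')
    · cases heq; exact hne rfl
    · exact hC x y x' y' hS hS' ⟨hadj, heq, hne⟩ hcc
  refine ⟨key, ?_⟩
  refine ⟨fun x m => if h : ∃ y, (x, y) ∈ S ∧ cC (x, y) = m then f x h.choose else Classical.arbitrary Z,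
         fun y m => if h : ∃ x, (x, y) ∈ S ∧ cC (x, y) = m then f h.choose y else Classical.arbitrary Z, ?_⟩
  intro x y hS
  constructor
  · have h : ∃ y', (x, y') ∈ S ∧ cC (x, y') = cC (x, y) := ⟨y, hS, rfl⟩
    simp only [dif_pos h]
    exact key x h.choose x y h.choose_spec.1 hS (Or.inl rfl) h.choose_spec.2
  · have h : ∃ x', (x', y) ∈ S ∧ cC (x', y) = cC (x, y) := ⟨x, hS, rfl⟩
    simp only [dif_pos h]
    exact key h.choose y x y h.choose_spec.1 hS (Or.inr rfl) h.choose_spec.2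
end
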